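/- In the real Clifford algebra Cl(7,0), the element ρ = (3·e1234567 + θ64)/4, where θ64 = e123 + e145 + e167 + e246 - e257 - e347 - e356, satisfies ρ² = -1. -/

import Mathlib

/-!
The pseudoscalar `ω = e1234567` is central, each generator anticommuting with the six others in it,
and `ω² = -1`. Each of the seven terms of `θ = θ64` squares to `-1` and the cross terms add up to
`-6 ωθ`, so `θ² = -7 - 6 ωθ`. Hence `(3ω + θ)² = 9ω² + 6ωθ + θ² = -16`.
-/

noncomputable def Q7 : QuadraticForm ℝ (Fin 7 → ℝ) :=
  QuadraticMap.weightedSumSquares ℝ (fun _ : Fin 7 => (1 : ℝ))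

noncomputable def e7 (i : Fin 7) : CliffordAlgebra Q7 :=
  CliffordAlgebra.ι Q7 (Pi.single i 1)

/-- Product of generators with the given (0-based) indices. -/
noncomputable def p7 (l : List (Fin 7)) : CliffordAlgebra Q7 := (l.map e7).prod

/-- θ64 = e123 + e145 + e167 + e246 - e257 - e347 - e356 (1-based indices). -/
noncomputable def θ64 : CliffordAlgebra Q7 :=
  p7 [0,1,2] + p7 [0,3,4] + p7 [0,5,6] + p7 [1,3,5] - p7 [1,4,6] - p7 [2,3,6] - p7 [2,4,5]

namespace QuadraticMap

variable {ι R : Type*} [Fintype ι] [DecidableEq ι] [CommSemiring R] (w : ι → R)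

theorem weightedSumSquares_single (i : ι) (a : R) :
    weightedSumSquares R w (Pi.single i a) = w i * (a * a) := by
  rw [weightedSumSquares_apply, Finset.sum_eq_single i] <;> simp_all

theorem isOrtho_weightedSumSquares_single {i j : ι} (h : i ≠ j) (a b : R) :
    (weightedSumSquares R w).IsOrtho (Pi.single i a) (Pi.single j b) := by
  simp only [isOrtho_def, weightedSumSquares_apply, ← Finset.sum_add_distrib, ← smul_add]
  refine Finset.sum_congr rfl fun k _ => ?_
  by_cases hi : k = i <;> by_cases hj : k = j <;> simp_all

end QuadraticMap

open CliffordAlgebra QuadraticMap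

theorem e7_mul_self (i : Fin 7) : e7 i * e7 i = 1 := by
  rw [e7, ι_sq_scalar, Q7, weightedSumSquares_single]
  simp

/- Rewriting with the next three lemmas and `e7_mul_self`, deciding the index comparisons,
sorts a right-nested word in the generators into a strictly increasing one, with its sign. -/
theorem e7_mul_e7_mul_self (i : Fin 7) (x : CliffordAlgebra Q7) : e7 i * (e7 i * x) = x := by
  rw [← mul_assoc, e7_mul_self, one_mul]

theorem e7_mul_e7_of_lt {i j : Fin 7} (h : j < i) : e7 i * e7 j = -(e7 j * e7 i) :=
  ι_mul_ι_comm_of_isOrtho (isOrtho_weightedSumSquares_single _ h.ne' _ _)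

theorem e7_mul_e7_mul_of_lt {i j : Fin 7} (h : j < i) (x : CliffordAlgebra Q7) :
    e7 i * (e7 j * x) = -(e7 j * (e7 i * x)) :=
  ι_mul_ι_mul_of_isOrtho x (isOrtho_weightedSumSquares_single _ h.ne' _ _)

local notation "ω" => p7 [0,1,2,3,4,5,6]

theorem pseudoscalar7_mul_self : ω * ω = -1 := by
  simp only [p7, List.map_cons, List.map_nil, List.prod_cons, List.prod_nil, mul_one, mul_assoc]
  simp +decide only [e7_mul_self, e7_mul_e7_mul_of_lt, mul_neg, neg_neg, mul_one]

theorem commute_e7_pseudoscalar7 (i : Fin 7) : Commute (e7 i) ω := by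
  fin_cases i <;>
  · simp only [Fin.reduceFinMk, Commute, SemiconjBy, p7, List.map_cons, List.map_nil,
      List.prod_cons, List.prod_nil, mul_one, mul_assoc]
    simp +decide only [e7_mul_e7_mul_self, e7_mul_self, e7_mul_e7_mul_of_lt, e7_mul_e7_of_lt,
      mul_neg, neg_neg, mul_one]

theorem commute_p7_pseudoscalar7 (l : List (Fin 7)) : Commute (p7 l) ω := by
  induction l with
  | nil => exact Commute.one_left _
  | cons i l ih =>
    simpa only [p7, List.map_cons, List.prod_cons] using (commute_e7_pseudoscalar7 i).mul_left ih

theorem commute_θ64_pseudoscalar7 : Commute θ64 ω := by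
  unfold θ64
  apply_rules [Commute.add_left, Commute.sub_left, commute_p7_pseudoscalar7]

theorem θ64_mul_self : θ64 * θ64 = -7 - 6 * (ω * θ64) := by
  rw [← sub_eq_zero]
  simp only [θ64, p7, List.map_cons, List.map_nil, List.prod_cons, List.prod_nil, mul_one]
  simp only [sub_eq_add_neg, mul_add, add_mul, neg_mul, mul_neg, mul_assoc]
  simp +decide only [e7_mul_e7_mul_self, e7_mul_self, e7_mul_e7_mul_of_lt, e7_mul_e7_of_lt,
    mul_neg, neg_neg, mul_one]
  noncomm_ring
  norm_num

/-- ρ = (3·e1234567 + θ64)/4 satisfies ρ² = -1. -/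
theorem stmt13 :
    ((4 : ℝ)⁻¹ • (3 * p7 [0,1,2,3,4,5,6] + θ64)) ^ 2 = -1 := by
  have h : (3 * ω + θ64) ^ 2 = -16 := by
    linear_combination (norm := (noncomm_ring; norm_num)) 9 * pseudoscalar7_mul_self +
      3 * commute_θ64_pseudoscalar7.eq + θ64_mul_self
  rw [smul_pow, h, Algebra.smul_def, ← map_ofNat (algebraMap ℝ _) 16, ← map_neg, ← map_mul]
  norm_num
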